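/- arXiv:2307.14445 — 4 statements merged into one kernel-verified Lean document; each statement's English description precedes it below -/
import Mathlib

section
/- Let x, s ∈ ℝⁿ be strictly positive, μ = xᵀs/n, and suppose the inexact search directions satisfy Δx̃ᵀ Δs̃ = 0 and X Δs̃ + S Δx̃ = βμe - Xs + r where ‖r‖₂ ≤ ημ with 0 ≤ η < 1 and β ∈ [0,1]. Then (β - η/√n)(xᵀs) ≤ (x + Δx̃)ᵀ(s + Δs̃) ≤ (β + η/√n)(xᵀs). -/
open Finset Matrix

/-- optimality-gap bounds after an inexact feasible step. -/
theorem stmt_2 (n : ℕ) (hn : 0 < n)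
    (x s Δx Δs r : Fin n → ℝ) (β η μ : ℝ)
    (hx : ∀ i, 0 < x i) (hs : ∀ i, 0 < s i)
    (hμ : μ = (x ⬝ᵥ s) / n)
    (hβ : β ∈ Set.Icc (0 : ℝ) 1) (hη : 0 ≤ η) (hη1 : η < 1)
    (horth : Δx ⬝ᵥ Δs = 0)
    (hNewton : ∀ i, x i * Δs i + s i * Δx i = β * μ - x i * s i + r i)
    (hr : Real.sqrt (∑ i, (r i) ^ 2) ≤ η * μ) :
    (β - η / Real.sqrt n) * (x ⬝ᵥ s) ≤ (x + Δx) ⬝ᵥ (s + Δs) ∧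
      (x + Δx) ⬝ᵥ (s + Δs) ≤ (β + η / Real.sqrt n) * (x ⬝ᵥ s) := by
  have hA : 0 < x ⬝ᵥ s := by
    apply Finset.sum_pos (fun i _ => mul_pos (hx i) (hs i))
    exact ⟨⟨0, hn⟩, Finset.mem_univ _⟩
  have hnpos : (0 : ℝ) < n := by exact_mod_cast hn
  have hsn : (0 : ℝ) < Real.sqrt n := Real.sqrt_pos.mpr hnpos
  have hμpos : 0 < μ := by rw [hμ]; positivity
  -- key identity
  have hkey : (x + Δx) ⬝ᵥ (s + Δs) = β * (x ⬝ᵥ s) + ∑ i, r i := by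
    have hsum : ∑ i, (x i * Δs i + s i * Δx i)
        = ∑ i, (β * μ - x i * s i + r i) := by
      exact Finset.sum_congr rfl fun i _ => hNewton i
    have hμn : (n : ℝ) * μ = x ⬝ᵥ s := by
      rw [hμ]; field_simp
    simp only [dotProduct, Pi.add_apply] at *
    have : ∑ i, (x i + Δx i) * (s i + Δs i)
        = ∑ i, x i * s i + ∑ i, (x i * Δs i + s i * Δx i) + ∑ i, Δx i * Δs i := by
      rw [← Finset.sum_add_distrib, ← Finset.sum_add_distrib]
      exact Finset.sum_congr rfl fun i _ => by ring
    rw [this, horth, hsum, Finset.sum_add_distrib, Finset.sum_sub_distrib]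
    simp only [Finset.sum_const, Finset.card_univ, Fintype.card_fin, nsmul_eq_mul]
    rw [show (n : ℝ) * (β * μ) = β * ((n : ℝ) * μ) by ring, hμn]
    ring
  -- bound on sum of r
  have habs : |∑ i, r i| ≤ Real.sqrt n * (η * μ) := by
    have h1 : (∑ i, r i) ^ 2 ≤ (n : ℝ) * ∑ i, (r i) ^ 2 := by
      have h := Finset.sum_mul_sq_le_sq_mul_sq Finset.univ (fun _ => (1:ℝ)) r
      simpa [Finset.card_univ, mul_comm] using h
    have h2 : |∑ i, r i| ≤ Real.sqrt ((n : ℝ) * ∑ i, (r i) ^ 2) := by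
      rw [← Real.sqrt_sq_eq_abs]; exact Real.sqrt_le_sqrt h1
    rw [Real.sqrt_mul hnpos.le] at h2
    exact h2.trans (mul_le_mul_of_nonneg_left hr hsn.le)
  have hAn : η / Real.sqrt n * (x ⬝ᵥ s) = Real.sqrt n * (η * μ) := by
    have : x ⬝ᵥ s = (n : ℝ) * μ := by rw [hμ]; field_simp
    rw [this, show η / Real.sqrt n * ((n:ℝ) * μ) = η * μ * ((n:ℝ) / Real.sqrt n) from by ring,
      Real.div_sqrt]
    ring
  rw [abs_le] at habs
  constructor
  · rw [hkey, sub_mul]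
    nlinarith [habs.1, hAn]
  · rw [hkey, add_mul]
    nlinarith [habs.2, hAn]
end

section
/- Let x, s ∈ ℝⁿ with x, s > 0, ‖x‖, ‖s‖ ≤ ω, μ > 0, and suppose XS = μI + θμL for a diagonal matrix L with -I ⪯ L ⪯ I and θ ∈ [0, 1/4]. Then the symmetric matrix U = [[X², -θμL],[-θμL, S²]] is positive definite, with smallest eigenvalue at least μ²/(4ω²) and largest eigenvalue at most 2ω²; consequently κ(U) ≤ 8ω⁴/μ². -/
/-!
Coordinate by coordinate, `U` couples only `v (inl i)` and `v (inr i)`, so its quadratic form is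
a sum of the binary forms `x_i² a² - 2θμℓ_i a b + s_i² b²`, and it suffices to bound these by
`t (a² + b²)` from below and `2ω² (a² + b²)` from above; the eigenvalues of `U` are then
Rayleigh quotients at unit eigenvectors. From below, `t = μ²/(4ω²)` works by the discriminant
criterion: `x_i² s_i² - θ²μ²ℓ_i² = μ²(1 + 2θℓ_i) ≥ μ²/2`, while `t (x_i² + s_i²) ≤ 2tω² = μ²/2`.
From above, `x_i², s_i² ≤ ω²` and `θμ|ℓ_i| ≤ μ/4 ≤ ω²/3` because `3μ/4 ≤ x_i s_i ≤ ω²`.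
-/

open Matrix Finset

lemma mul_add_sq_le_of_sq_le_mul {p q r t : ℝ} (hp : 0 < p - t) (hr : r ^ 2 ≤ (p - t) * (q - t))
    (a b : ℝ) : t * (a ^ 2 + b ^ 2) ≤ p * a ^ 2 + 2 * r * a * b + q * b ^ 2 := by
  have hsq : (p - t) * ((p - t) * a ^ 2 + 2 * r * a * b + (q - t) * b ^ 2) =
      ((p - t) * a + r * b) ^ 2 + ((p - t) * (q - t) - r ^ 2) * b ^ 2 := by ring
  have : 0 ≤ (p - t) * a ^ 2 + 2 * r * a * b + (q - t) * b ^ 2 :=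
    nonneg_of_mul_nonneg_right (hsq ▸ by positivity) hp
  nlinarith

lemma add_sq_le_mul_of_le {p q r m k : ℝ} (hp : p ≤ m) (hq : q ≤ m) (hr : |r| ≤ k) (a b : ℝ) :
    p * a ^ 2 + 2 * r * a * b + q * b ^ 2 ≤ (m + k) * (a ^ 2 + b ^ 2) := by
  have hab : 2 * r * a * b ≤ |r| * (a ^ 2 + b ^ 2) := by
    nlinarith [mul_nonneg (neg_le_iff_add_nonneg.mp (neg_abs_le r)) (sq_nonneg (a - b)),
      mul_nonneg (sub_nonneg.mpr (le_abs_self r)) (sq_nonneg (a + b))]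
  nlinarith [mul_le_mul_of_nonneg_right hp (sq_nonneg a), mul_le_mul_of_nonneg_right hq (sq_nonneg b),
    mul_le_mul_of_nonneg_right hr (add_nonneg (sq_nonneg a) (sq_nonneg b))]

lemma le_quadForm_of_mul_eq {x s l μ θ ω : ℝ} (hμ : 0 < μ) (hω : 0 < ω) (hx : x ^ 2 ≤ ω ^ 2)
    (hs : s ^ 2 ≤ ω ^ 2) (hxs : x * s = μ * (1 + θ * l)) (hθl : |θ * l| ≤ 1 / 4) (a b : ℝ) :
    μ ^ 2 / (4 * ω ^ 2) * (a ^ 2 + b ^ 2) ≤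
      x ^ 2 * a ^ 2 + 2 * -(θ * μ * l) * a * b + s ^ 2 * b ^ 2 := by
  obtain ⟨hθl₀, hθl₁⟩ := abs_le.mp hθl
  set t := μ ^ 2 / (4 * ω ^ 2)
  have ht : t * (4 * ω ^ 2) = μ ^ 2 := div_mul_cancel₀ _ (by positivity)
  have hxs2 : x ^ 2 * s ^ 2 = μ ^ 2 * (1 + θ * l) ^ 2 := by rw [← mul_pow, hxs, mul_pow]
  refine mul_add_sq_le_of_sq_le_mul ?_ ?_ a b
  · have h916 : 9 / 16 * μ ^ 2 ≤ x ^ 2 * s ^ 2 := by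
      rw [hxs2]
      nlinarith [mul_le_mul_of_nonneg_left (show 9 / 16 ≤ (1 + θ * l) ^ 2 by nlinarith)
        (sq_nonneg μ)]
    have : 0 < (x ^ 2 - t) * ω ^ 2 := by
      nlinarith [mul_le_mul_of_nonneg_left hs (sq_nonneg x)]
    exact pos_of_mul_pos_left this (by positivity)
  · have ht0 : 0 ≤ t := by positivity
    nlinarith [mul_le_mul_of_nonneg_left (add_le_add hx hs) ht0, sq_nonneg t, sq_nonneg μ]

lemma quadForm_le_of_mul_eq {x s l μ θ ω : ℝ} (hμ : 0 < μ) (hx : x ^ 2 ≤ ω ^ 2)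
    (hs : s ^ 2 ≤ ω ^ 2) (hxs : x * s = μ * (1 + θ * l)) (hθl : |θ * l| ≤ 1 / 4) (a b : ℝ) :
    x ^ 2 * a ^ 2 + 2 * -(θ * μ * l) * a * b + s ^ 2 * b ^ 2 ≤ 2 * ω ^ 2 * (a ^ 2 + b ^ 2) := by
  have hμω : 3 / 4 * μ ≤ ω ^ 2 := by
    nlinarith [two_mul_le_add_sq x s, neg_abs_le (θ * l)]
  have hr : |-(θ * μ * l)| ≤ ω ^ 2 := by
    rw [abs_neg, mul_right_comm, abs_mul, abs_of_pos hμ]; nlinarith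
  simpa [two_mul] using add_sq_le_mul_of_le hx hs hr a b

lemma sq_le_of_sqrt_sum_sq_le {ι : Type*} [Fintype ι] {y : ι → ℝ} {ω : ℝ} (hω : 0 ≤ ω)
    (hy : √(∑ i, y i ^ 2) ≤ ω) (i : ι) : y i ^ 2 ≤ ω ^ 2 :=
  (single_le_sum (f := fun i => y i ^ 2) (fun j _ => sq_nonneg (y j)) (mem_univ i)).trans
    ((Real.sqrt_le_left hω).mp hy)

section FromBlocksDiagonal

variable {ι : Type*} [Fintype ι]

lemma dotProduct_self_sum_type (v : ι ⊕ ι → ℝ) :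
    v ⬝ᵥ v = ∑ i, (v (.inl i) ^ 2 + v (.inr i) ^ 2) := by
  simp only [dotProduct, Fintype.sum_sum_type, ← Finset.sum_add_distrib, sq]

variable [DecidableEq ι]

lemma dotProduct_fromBlocks_diagonal_mulVec (p q r : ι → ℝ) (v : ι ⊕ ι → ℝ) :
    v ⬝ᵥ fromBlocks (diagonal p) (diagonal r) (diagonal r) (diagonal q) *ᵥ v =
      ∑ i, (p i * v (.inl i) ^ 2 + 2 * r i * v (.inl i) * v (.inr i) + q i * v (.inr i) ^ 2) := by
  simp only [dotProduct, fromBlocks_mulVec, Fintype.sum_sum_type, Sum.elim_inl, Sum.elim_inr,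
    Pi.add_apply, mulVec_diagonal, Function.comp_apply, ← Finset.sum_add_distrib]
  exact Finset.sum_congr rfl fun i _ => by ring

lemma mul_dotProduct_self_le_fromBlocks_diagonal {p q r : ι → ℝ} {t : ℝ}
    (h : ∀ i a b, t * (a ^ 2 + b ^ 2) ≤ p i * a ^ 2 + 2 * r i * a * b + q i * b ^ 2)
    (v : ι ⊕ ι → ℝ) :
    t * (v ⬝ᵥ v) ≤ v ⬝ᵥ fromBlocks (diagonal p) (diagonal r) (diagonal r) (diagonal q) *ᵥ v := by
  rw [dotProduct_fromBlocks_diagonal_mulVec, dotProduct_self_sum_type, mul_sum]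
  exact sum_le_sum fun i _ => h i _ _

lemma fromBlocks_diagonal_le_mul_dotProduct_self {p q r : ι → ℝ} {T : ℝ}
    (h : ∀ i a b, p i * a ^ 2 + 2 * r i * a * b + q i * b ^ 2 ≤ T * (a ^ 2 + b ^ 2))
    (v : ι ⊕ ι → ℝ) :
    v ⬝ᵥ fromBlocks (diagonal p) (diagonal r) (diagonal r) (diagonal q) *ᵥ v ≤ T * (v ⬝ᵥ v) := by
  rw [dotProduct_fromBlocks_diagonal_mulVec, dotProduct_self_sum_type, mul_sum]
  exact sum_le_sum fun i _ => h i _ _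

end FromBlocksDiagonal

namespace Matrix.IsHermitian

variable {ι : Type*} [Fintype ι] {A : Matrix ι ι ℝ}

lemma posDef_of_le_dotProduct (hA : A.IsHermitian) {t : ℝ} (ht : 0 < t)
    (h : ∀ v, t * (v ⬝ᵥ v) ≤ v ⬝ᵥ A *ᵥ v) : A.PosDef :=
  .of_dotProduct_mulVec_pos hA fun v hv =>
    (mul_pos ht (dotProduct_self_star_pos_iff.mpr hv)).trans_le (by simpa using h v)

variable [DecidableEq ι]

lemma eigenvalues_eq_dotProduct (hA : A.IsHermitian) (i : ι) :
    hA.eigenvalues i = ⇑(hA.eigenvectorBasis i) ⬝ᵥ A *ᵥ ⇑(hA.eigenvectorBasis i) := by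
  simpa using hA.eigenvalues_eq i

lemma dotProduct_self_eigenvectorBasis (hA : A.IsHermitian) (i : ι) :
    ⇑(hA.eigenvectorBasis i) ⬝ᵥ ⇑(hA.eigenvectorBasis i) = 1 := by
  have h := real_inner_self_eq_norm_sq (hA.eigenvectorBasis i)
  rw [hA.eigenvectorBasis.orthonormal.1 i, EuclideanSpace.inner_eq_star_dotProduct] at h
  simpa using h

lemma le_eigenvalues_of_le_dotProduct (hA : A.IsHermitian) {t : ℝ}
    (h : ∀ v, t * (v ⬝ᵥ v) ≤ v ⬝ᵥ A *ᵥ v) (i : ι) : t ≤ hA.eigenvalues i := by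
  simpa [hA.eigenvalues_eq_dotProduct, hA.dotProduct_self_eigenvectorBasis] using
    h (hA.eigenvectorBasis i)

lemma eigenvalues_le_of_dotProduct_le (hA : A.IsHermitian) {T : ℝ}
    (h : ∀ v, v ⬝ᵥ A *ᵥ v ≤ T * (v ⬝ᵥ v)) (i : ι) : hA.eigenvalues i ≤ T := by
  simpa [hA.eigenvalues_eq_dotProduct, hA.dotProduct_self_eigenvectorBasis] using
    h (hA.eigenvectorBasis i)

end Matrix.IsHermitian

lemma iSup_div_iInf_le {ι : Type*} [Nonempty ι] {f : ι → ℝ} {t T : ℝ} (ht : 0 < t)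
    (hlo : ∀ i, t ≤ f i) (hhi : ∀ i, f i ≤ T) : (⨆ i, f i) / (⨅ i, f i) ≤ T / t :=
  div_le_div₀ ((ht.trans_le (hlo (Classical.arbitrary ι))).le.trans (hhi _)) (ciSup_le hhi) ht
    (le_ciInf hlo)

theorem stmt_8_general (n : ℕ) (hn : 0 < n)
    (x s ℓ : Fin n → ℝ) (μ θ ω : ℝ)
    (hμ : 0 < μ) (hω : 0 < ω)
    (hxnorm : Real.sqrt (∑ i, (x i) ^ 2) ≤ ω)
    (hsnorm : Real.sqrt (∑ i, (s i) ^ 2) ≤ ω)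
    (hℓ : ∀ i, |ℓ i| ≤ 1)
    (hxs : ∀ i, x i * s i = μ * (1 + θ * ℓ i))
    (hθ : θ ∈ Set.Icc (0 : ℝ) (1 / 4))
    (U : Matrix (Fin n ⊕ Fin n) (Fin n ⊕ Fin n) ℝ)
    (hU : U = Matrix.fromBlocks
      (Matrix.diagonal fun i => (x i) ^ 2) (-((θ * μ) • Matrix.diagonal ℓ))
      (-((θ * μ) • Matrix.diagonal ℓ)) (Matrix.diagonal fun i => (s i) ^ 2))
    (hUH : U.IsHermitian) :
    U.PosDef ∧
      (∀ v : Fin n ⊕ Fin n → ℝ,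
        μ ^ 2 / (4 * ω ^ 2) * (v ⬝ᵥ v) ≤ v ⬝ᵥ U.mulVec v ∧
          v ⬝ᵥ U.mulVec v ≤ 2 * ω ^ 2 * (v ⬝ᵥ v)) ∧
      (⨆ i, hUH.eigenvalues i) / (⨅ i, hUH.eigenvalues i) ≤ 8 * ω ^ 4 / μ ^ 2 := by
  have hθℓ (i : Fin n) : |θ * ℓ i| ≤ 1 / 4 := by
    rw [abs_mul, abs_of_nonneg hθ.1]
    simpa using mul_le_mul hθ.2 (hℓ i) (abs_nonneg _) (by norm_num)
  have hx := sq_le_of_sqrt_sum_sq_le hω.le hxnorm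
  have hs := sq_le_of_sqrt_sum_sq_le hω.le hsnorm
  have hB : -((θ * μ) • diagonal ℓ) = diagonal fun i => -(θ * μ * ℓ i) := by
    rw [← diagonal_smul, diagonal_neg]; rfl
  rw [hB] at hU
  have hlower (v : Fin n ⊕ Fin n → ℝ) : μ ^ 2 / (4 * ω ^ 2) * (v ⬝ᵥ v) ≤ v ⬝ᵥ U *ᵥ v :=
    hU ▸ mul_dotProduct_self_le_fromBlocks_diagonal
      (fun i => le_quadForm_of_mul_eq hμ hω (hx i) (hs i) (hxs i) (hθℓ i)) v
  have hupper (v : Fin n ⊕ Fin n → ℝ) : v ⬝ᵥ U *ᵥ v ≤ 2 * ω ^ 2 * (v ⬝ᵥ v) :=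
    hU ▸ fromBlocks_diagonal_le_mul_dotProduct_self
      (fun i => quadForm_le_of_mul_eq hμ (hx i) (hs i) (hxs i) (hθℓ i)) v
  have : Nonempty (Fin n ⊕ Fin n) := ⟨.inl ⟨0, hn⟩⟩
  refine ⟨hUH.posDef_of_le_dotProduct (by positivity) hlower, fun v => ⟨hlower v, hupper v⟩, ?_⟩
  calc _ ≤ 2 * ω ^ 2 / (μ ^ 2 / (4 * ω ^ 2)) :=
        iSup_div_iInf_le (by positivity) (hUH.le_eigenvalues_of_le_dotProduct hlower)
          (hUH.eigenvalues_le_of_dotProduct_le hupper)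
    _ = 8 * ω ^ 4 / μ ^ 2 := by field_simp; ring

/-- the block matrix `U = [[X², -θμL],[-θμL, S²]]` is positive
definite with smallest eigenvalue at least `μ²/(4ω²)` and largest at most
`2ω²`; consequently `κ(U) ≤ 8ω⁴/μ²`. -/
theorem stmt_8 (n : ℕ) (hn : 0 < n)
    (x s ℓ : Fin n → ℝ) (μ θ ω : ℝ)
    (hx : ∀ i, 0 < x i) (hs : ∀ i, 0 < s i)
    (hμ : 0 < μ) (hω : 0 < ω)
    (hxnorm : Real.sqrt (∑ i, (x i) ^ 2) ≤ ω)
    (hsnorm : Real.sqrt (∑ i, (s i) ^ 2) ≤ ω)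
    (hℓ : ∀ i, |ℓ i| ≤ 1)
    (hxs : ∀ i, x i * s i = μ * (1 + θ * ℓ i))
    (hθ : θ ∈ Set.Icc (0 : ℝ) (1 / 4))
    (U : Matrix (Fin n ⊕ Fin n) (Fin n ⊕ Fin n) ℝ)
    (hU : U = Matrix.fromBlocks
      (Matrix.diagonal fun i => (x i) ^ 2) (-((θ * μ) • Matrix.diagonal ℓ))
      (-((θ * μ) • Matrix.diagonal ℓ)) (Matrix.diagonal fun i => (s i) ^ 2))
    (hUH : U.IsHermitian) :
    U.PosDef ∧
      (∀ v : Fin n ⊕ Fin n → ℝ,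
        μ ^ 2 / (4 * ω ^ 2) * (v ⬝ᵥ v) ≤ v ⬝ᵥ U.mulVec v ∧
          v ⬝ᵥ U.mulVec v ≤ 2 * ω ^ 2 * (v ⬝ᵥ v)) ∧
      (⨆ i, hUH.eigenvalues i) / (⨅ i, hUH.eigenvalues i) ≤ 8 * ω ^ 4 / μ ^ 2 :=
  stmt_8_general n hn x s ℓ μ θ ω hμ hω hxnorm hsnorm hℓ hxs hθ U hU hUH
end

section
/- Let (x, y, s) be feasible for the primal-dual pair (Ax = b, x ≥ 0; Aᵀy + s = c, s ≥ 0), ∇ > 1 a scaling factor, and (x̂, ŷ, ŝ) a ζ̂-optimal solution of the refining problem min ∇sᵀx̂ s.t. Ax̂ = 0, x̂ ≥ -∇x (with dual Aᵀŷ + ŝ = ∇s, ŝ ≥ 0), meaning Ax̂ = 0, x̂ ≥ -∇x, Aᵀŷ + ŝ = ∇s, ŝ ≥ 0, and (x̂ + ∇x)ᵀŝ ≤ ζ̂. Then xʳ = x + x̂/∇, yʳ = y + ŷ/∇, sʳ = c - Aᵀyʳ is feasible for the original pair and satisfies (xʳ)ᵀsʳ ≤ ζ̂/∇². -/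
open Matrix

/-!
Since `Aᵀŷ = ∇s - ŝ`, the refined slack is `sʳ = c - Aᵀy - ∇⁻¹Aᵀŷ = s - ∇⁻¹(∇s - ŝ) = ∇⁻¹ŝ`,
and likewise `xʳ = ∇⁻¹(x̂ + ∇x)`. So the refined pair is the refining pair's primal
shifted by `∇x` and its dual slack, both scaled by `∇⁻¹`: feasibility is inherited and the
duality gap scales by `∇⁻²`.
-/

section Refinement

variable {𝕜 ι κ : Type*} [Field 𝕜]

theorem add_inv_smul_eq_inv_smul_add_smul {t : 𝕜} (ht : t ≠ 0) (x xh : ι → 𝕜) :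
    x + t⁻¹ • xh = t⁻¹ • (xh + t • x) := by
  rw [smul_add, inv_smul_smul₀ ht, add_comm]

theorem sub_mulVec_add_inv_smul_eq_inv_smul {t : 𝕜} (ht : t ≠ 0)
    {A : Matrix κ ι 𝕜} {c s sh : ι → 𝕜} {y yh : κ → 𝕜} [Fintype κ]
    (hDy : Aᵀ *ᵥ y + s = c) (hDyh : Aᵀ *ᵥ yh + sh = t • s) :
    c - Aᵀ *ᵥ (y + t⁻¹ • yh) = t⁻¹ • sh := by
  have hAyh : Aᵀ *ᵥ yh = t • s - sh := eq_sub_of_add_eq hDyh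
  rw [← hDy, mulVec_add, mulVec_smul, hAyh, smul_sub, inv_smul_smul₀ ht]
  abel

theorem inv_smul_dotProduct_inv_smul [Fintype ι] (t : 𝕜) (v w : ι → 𝕜) :
    (t⁻¹ • v) ⬝ᵥ (t⁻¹ • w) = (v ⬝ᵥ w) / t ^ 2 := by
  rw [smul_dotProduct, dotProduct_smul, smul_smul, smul_eq_mul]
  ring

end Refinement

theorem stmt_11_general (m n : ℕ)
    (A : Matrix (Fin m) (Fin n) ℝ) (b : Fin m → ℝ) (c : Fin n → ℝ)
    (x xh xr sr s sh : Fin n → ℝ) (y yh yr : Fin m → ℝ)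
    (nab zh : ℝ) (hnab : 1 < nab)
    -- feasibility of (x, y, s) for the original pair
    (hPx : A.mulVec x = b)
    (hDy : Aᵀ.mulVec y + s = c)
    -- ζ̂-optimality of (x̂, ŷ, ŝ) for the refining problem
    (hPxh : A.mulVec xh = 0) (hxh : ∀ i, -(nab * x i) ≤ xh i)
    (hDyh : Aᵀ.mulVec yh + sh = nab • s) (hsh0 : ∀ i, 0 ≤ sh i)
    (hgap : (xh + nab • x) ⬝ᵥ sh ≤ zh)
    -- the refined solution
    (hxr : xr = x + nab⁻¹ • xh) (hyr : yr = y + nab⁻¹ • yh)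
    (hsr : sr = c - Aᵀ.mulVec yr) :
    A.mulVec xr = b ∧ (∀ i, 0 ≤ xr i) ∧
      Aᵀ.mulVec yr + sr = c ∧ (∀ i, 0 ≤ sr i) ∧
      xr ⬝ᵥ sr ≤ zh / nab ^ 2 := by
  have hpos : 0 < nab := one_pos.trans hnab
  have hxr' : xr = nab⁻¹ • (xh + nab • x) :=
    hxr.trans (add_inv_smul_eq_inv_smul_add_smul hpos.ne' x xh)
  have hsr' : sr = nab⁻¹ • sh := by
    rw [hsr, hyr, sub_mulVec_add_inv_smul_eq_inv_smul hpos.ne' hDy hDyh]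
  have hinv : 0 ≤ nab⁻¹ := inv_nonneg.mpr hpos.le
  refine ⟨?_, fun i => ?_, by rw [hsr, add_sub_cancel], fun i => ?_, ?_⟩
  · rw [hxr, mulVec_add, mulVec_smul, hPxh, hPx, smul_zero, add_zero]
  · have hshift : 0 ≤ xh i + nab * x i := by linarith [hxh i]
    rw [hxr']
    exact mul_nonneg hinv hshift
  · rw [hsr']
    exact mul_nonneg hinv (hsh0 i)
  · rw [hxr', hsr', inv_smul_dotProduct_inv_smul]
    exact div_le_div_of_nonneg_right hgap (sq_nonneg nab)

/-- a `ζ̂`-optimal solution of the refining problem yields a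
`ζ̂/∇²`-optimal feasible solution of the original primal-dual pair. -/
theorem stmt_11 (m n : ℕ)
    (A : Matrix (Fin m) (Fin n) ℝ) (b : Fin m → ℝ) (c : Fin n → ℝ)
    (x xh xr sr s sh : Fin n → ℝ) (y yh yr : Fin m → ℝ)
    (nab zh : ℝ) (hnab : 1 < nab) (hzh : 0 ≤ zh)
    -- feasibility of (x, y, s) for the original pair
    (hPx : A.mulVec x = b) (hx0 : ∀ i, 0 ≤ x i)
    (hDy : Aᵀ.mulVec y + s = c) (hs0 : ∀ i, 0 ≤ s i)
    -- ζ̂-optimality of (x̂, ŷ, ŝ) for the refining problem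
    (hPxh : A.mulVec xh = 0) (hxh : ∀ i, -(nab * x i) ≤ xh i)
    (hDyh : Aᵀ.mulVec yh + sh = nab • s) (hsh0 : ∀ i, 0 ≤ sh i)
    (hgap : (xh + nab • x) ⬝ᵥ sh ≤ zh)
    -- the refined solution
    (hxr : xr = x + nab⁻¹ • xh) (hyr : yr = y + nab⁻¹ • yh)
    (hsr : sr = c - Aᵀ.mulVec yr) :
    A.mulVec xr = b ∧ (∀ i, 0 ≤ xr i) ∧
      Aᵀ.mulVec yr + sr = c ∧ (∀ i, 0 ≤ sr i) ∧
      xr ⬝ᵥ sr ≤ zh / nab ^ 2 :=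
  stmt_11_general m n A b c x xh xr sr s sh y yh yr nab zh hnab hPx hDy hPxh hxh hDyh hsh0 hgap hxr
    hyr hsr
end

section
/- Let x, s > 0 with min_i x_i s_i ≥ (1-θ)μ' for some θ ∈ (0,1) and μ' > 0, and suppose directions Δx, Δs satisfy x_i(α)s_i(α) ≥ (1-θ)(β - η/√n)μ > 0 for all α ∈ [0,1], where x(α) = x + αΔx, s(α) = s + αΔs. Then x + Δx > 0 and s + Δs > 0 componentwise. -/
lemma aux_nozero (a b : ℝ) (ha : 0 < a)
    (h : ∀ α ∈ Set.Icc (0 : ℝ) 1, a + α * b ≠ 0) : 0 < a + b := by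
  by_contra hle
  push_neg at hle
  have hcont : ContinuousOn (fun α : ℝ => a + α * b) (Set.Icc 0 1) := by
    fun_prop
  have := intermediate_value_Icc' (by norm_num : (0:ℝ) ≤ 1) hcont
  have h0 : (0:ℝ) ∈ Set.Icc (a + 1 * b) (a + 0 * b) := by
    constructor <;> simp <;> linarith
  obtain ⟨α, hα, hαeq⟩ := this h0
  exact h α hα hαeq

/-- if the componentwise products along the whole segment of
step lengths stay strictly positive, then the full step stays strictly
positive. -/
theorem stmt_15 (n : ℕ)
    (x s Δx Δs : Fin n → ℝ) (θ μ' μ β η : ℝ)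
    (hθ : θ ∈ Set.Ioo (0 : ℝ) 1) (hμ' : 0 < μ')
    (hx : ∀ i, 0 < x i) (hs : ∀ i, 0 < s i)
    (hmin : ∀ i, (1 - θ) * μ' ≤ x i * s i)
    (hlb : 0 < (1 - θ) * (β - η / Real.sqrt n) * μ)
    (hseg : ∀ α ∈ Set.Icc (0 : ℝ) 1, ∀ i,
      (1 - θ) * (β - η / Real.sqrt n) * μ ≤ (x i + α * Δx i) * (s i + α * Δs i)) :
    ∀ i, 0 < x i + Δx i ∧ 0 < s i + Δs i := by
  intro i
  have hpos : ∀ α ∈ Set.Icc (0:ℝ) 1, 0 < (x i + α * Δx i) * (s i + α * Δs i) :=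
    fun α hα => lt_of_lt_of_le hlb (hseg α hα i)
  constructor
  · exact aux_nozero _ _ (hx i) (fun α hα h0 => by
      have := hpos α hα; rw [h0] at this; simp at this)
  · exact aux_nozero _ _ (hs i) (fun α hα h0 => by
      have := hpos α hα; rw [h0] at this; simp at this)
end
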